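/- arXiv:1301.7717 — 2 statements merged into one kernel-verified Lean document; each statement's English description precedes it below -/
import Mathlib

section
/- Let K be a closed convex cone and let F be a face of K of the form F = K ∩ u^⊥ for some u ∈ K*. Then F^⊥ (the orthogonal complement of the span of F) equals tan(u, K*), the tangent space of K* at u. -/
noncomputable section

/-- The dual cone of a set `S`: all `y` with `⟨x, y⟩ ≥ 0` for every `x ∈ S`. -/
def dualCone {E : Type*} [NormedAddCommGroup E] [InnerProductSpace ℝ E] (S : Set E) : Set E :=
  {y | ∀ x ∈ S, 0 ≤ (inner ℝ x y : ℝ)}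

/-- The orthogonal complement of the linear span of a set `S`. -/
def perpSpan {E : Type*} [NormedAddCommGroup E] [InnerProductSpace ℝ E] (S : Set E) : Set E :=
  {y | ∀ x ∈ S, (inner ℝ x y : ℝ) = 0}

/-- The cone of feasible directions of `C` at `x`. -/
def dirCone {E : Type*} [AddCommGroup E] [Module ℝ E] (x : E) (C : Set E) : Set E :=
  {y | ∃ t : ℝ, 0 < t ∧ x + t • y ∈ C}

/-- The tangent space of `C` at `x`: `cl(dir(x,C)) ∩ −cl(dir(x,C))`. -/
def tanSpace {E : Type*} [AddCommGroup E] [Module ℝ E] [TopologicalSpace E]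
    (x : E) (C : Set E) : Set E :=
  closure (dirCone x C) ∩ (-closure (dirCone x C))

/-- `F` is a face of the convex set `K`. -/
def IsFaceOf {E : Type*} [AddCommGroup E] [Module ℝ E] (F K : Set E) : Prop :=
  F ⊆ K ∧ Convex ℝ F ∧ ∀ x ∈ K, ∀ y ∈ K, ∀ t : ℝ, 0 < t → t < 1 →
    t • x + (1 - t) • y ∈ F → x ∈ F ∧ y ∈ F

end

/-!
The closure of the cone of feasible directions of `K*` at `u` is the dual cone of
`F = K ∩ u^⊥`. Every feasible direction pairs nonnegatively with `F`, because `F ⊥ u`.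
Conversely, by the bipolar theorem it suffices that `(cl dir(u, K*))* ⊆ F`: this cone
contains `K*` and `±u`, so its dual lies in `K** ∩ u^⊥ = F`. Hence
`tan(u, K*) = F* ∩ -F* = F^⊥`.
-/

open scoped RealInnerProductSpace

section PointedCones

variable {E : Type*} [AddCommGroup E] [Module ℝ E]

def Convex.dirPointedCone {C : Set E} (hC : Convex ℝ C) {x : E} (hx : x ∈ C) :
    PointedCone ℝ E where
  carrier := dirCone x C
  zero_mem' := ⟨1, one_pos, by simpa using hx⟩
  add_mem' := by
    rintro y₁ y₂ ⟨t₁, ht₁, h₁⟩ ⟨t₂, ht₂, h₂⟩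
    have hsum : 0 < t₁ + t₂ := add_pos ht₁ ht₂
    refine ⟨t₁ * t₂ / (t₁ + t₂), by positivity, ?_⟩
    convert hC h₁ h₂ (div_pos ht₂ hsum).le (div_pos ht₁ hsum).le
      (by rw [← add_div, add_comm, div_self hsum.ne']) using 1
    match_scalars <;> field_simp; ring
  smul_mem' := by
    rintro ⟨c, hc⟩ y ⟨t, ht, hty⟩
    change ∃ s : ℝ, 0 < s ∧ x + s • c • y ∈ C
    rcases hc.eq_or_lt with rfl | hc
    · exact ⟨1, one_pos, by simpa using hx⟩
    · refine ⟨t / c, div_pos ht hc, ?_⟩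
      rwa [smul_smul, div_mul_cancel₀ _ hc.ne']

def Convex.toPointedCone {K : Set E} (hconv : Convex ℝ K)
    (hcone : ∀ c : ℝ, 0 ≤ c → ∀ z ∈ K, c • z ∈ K) (hne : K.Nonempty) : PointedCone ℝ E where
  carrier := K
  zero_mem' := by simpa using hcone 0 le_rfl _ hne.some_mem
  add_mem' := by
    intro z₁ z₂ h₁ h₂
    convert hcone 2 zero_le_two _ (hconv h₁ h₂ one_half_pos.le one_half_pos.le (add_halves 1))
      using 1
    module
  smul_mem' c z hz := hcone c c.2 z hz

end PointedCones

section InnerProductSpace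

variable {E : Type*} [NormedAddCommGroup E] [InnerProductSpace ℝ E]

lemma isClosed_dualCone (S : Set E) : IsClosed (dualCone S) := by
  simpa only [dualCone, Set.ofPred_forall] using
    isClosed_biInter fun x _ => isClosed_le continuous_const (continuous_const.inner continuous_id)

lemma convex_dualCone (S : Set E) : Convex ℝ (dualCone S) := by
  intro y₁ h₁ y₂ h₂ a b ha hb _ x hx
  rw [inner_add_right, inner_smul_right, inner_smul_right]
  exact add_nonneg (mul_nonneg ha (h₁ x hx)) (mul_nonneg hb (h₂ x hx))

lemma zero_mem_dualCone (S : Set E) : (0 : E) ∈ dualCone S := fun x _ => by simp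

lemma dualCone_inter_neg_dualCone (S : Set E) : dualCone S ∩ -dualCone S = perpSpan S := by
  ext y
  simp only [Set.mem_inter_iff, Set.mem_neg, dualCone, perpSpan, Set.mem_ofPred_eq, inner_neg_right,
    neg_nonneg, ← forall_and]
  exact forall₂_congr fun x _ => le_antisymm_iff.symm.trans eq_comm

lemma dualCone_subset_dirCone {S : Set E} {u : E} (hu : u ∈ dualCone S) :
    dualCone S ⊆ dirCone u (dualCone S) := fun z hz =>
  ⟨1, one_pos, fun x hx => by rw [one_smul, inner_add_right]; exact add_nonneg (hu x hx) (hz x hx)⟩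

lemma neg_mem_dirCone_dualCone (S : Set E) (u : E) : -u ∈ dirCone u (dualCone S) :=
  ⟨1, one_pos, by simpa using zero_mem_dualCone S⟩

lemma dirCone_dualCone_subset (S : Set E) (u : E) :
    dirCone u (dualCone S) ⊆ dualCone (S ∩ {z | ⟪z, u⟫ = 0}) := by
  rintro y ⟨t, ht, hty⟩ x ⟨hxS, hxu⟩
  have := hty x hxS
  rw [inner_add_right, hxu, zero_add, inner_smul_right] at this
  exact nonneg_of_mul_nonneg_right this ht

variable [CompleteSpace E]

lemma coe_innerDual (S : Set E) : (ProperCone.innerDual S : Set E) = dualCone S := rfl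

lemma closure_dirCone_dualCone {K : Set E} (hKclosed : IsClosed K) (hKconv : Convex ℝ K)
    (hKcone : ∀ c : ℝ, 0 ≤ c → ∀ z ∈ K, c • z ∈ K) {u : E} (hu : u ∈ dualCone K) :
    closure (dirCone u (dualCone K)) = dualCone (K ∩ {z | ⟪z, u⟫ = 0}) := by
  rcases K.eq_empty_or_nonempty with rfl | hne
  -- `K** = K` fails for `K = ∅`, but then `K* = univ` and every direction is feasible.
  · simp [dualCone, dirCone, exists_gt]
  refine (closure_minimal (dirCone_dualCone_subset K u) (isClosed_dualCone _)).antisymm ?_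
  let D : ProperCone ℝ E := Submodule.closure ((convex_dualCone K).dirPointedCone hu)
  let P : ProperCone ℝ E := ⟨hKconv.toPointedCone hKcone hne, hKclosed⟩
  have hD : (D : Set E) = closure (dirCone u (dualCone K)) := rfl
  suffices h : (ProperCone.innerDual (D : Set E) : Set E) ⊆ K ∩ {z | ⟪z, u⟫ = 0} by
    rw [← hD, ← D.innerDual_innerDual, ← coe_innerDual]
    exact ProperCone.innerDual_le_innerDual h
  intro x hx
  have hxK : x ∈ K := by
    change x ∈ (P : Set E)
    rw [← P.innerDual_innerDual]
    exact fun z hz => hx (subset_closure (dualCone_subset_dirCone hu hz))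
  have hxu : 0 ≤ ⟪u, x⟫ := hx (subset_closure (dualCone_subset_dirCone hu hu))
  have hxnu : 0 ≤ ⟪-u, x⟫ := hx (subset_closure (neg_mem_dirCone_dualCone K u))
  rw [inner_neg_left, neg_nonneg] at hxnu
  exact ⟨hxK, (real_inner_comm u x).trans (le_antisymm hxnu hxu)⟩

end InnerProductSpace

theorem stmt14 {E : Type*} [NormedAddCommGroup E] [InnerProductSpace ℝ E]
    [FiniteDimensional ℝ E]
    (K : Set E) (hKclosed : IsClosed K) (hKconv : Convex ℝ K)
    (hKcone : ∀ c : ℝ, 0 ≤ c → ∀ z ∈ K, c • z ∈ K)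
    (u : E) (hu : u ∈ dualCone K) :
    perpSpan (K ∩ {z : E | (inner ℝ z u : ℝ) = 0}) = tanSpace u (dualCone K) := by
  rw [tanSpace, closure_dirCone_dualCone hKclosed hKconv hKcone hu, dualCone_inter_neg_dualCone]
end

section
/- The minimal cone admits the extended representation F_min = {s : 0 ≤_K s and s ≤_K αb − Ax for some x ∈ X and α ≥ 0}; that is, s ∈ F_min if and only if s ∈ K and αb − Ax − s ∈ K for some x and α ≥ 0. -/
open Set Filter Topology

theorem exists_add_smul_sub_mem_of_mem_intrinsicInterior {E : Type*} [AddCommGroup E]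
    [Module ℝ E] [TopologicalSpace E] [ContinuousAdd E] [ContinuousSMul ℝ E] {C : Set E} {z y : E}
    (hz : z ∈ intrinsicInterior ℝ C) (hy : y ∈ affineSpan ℝ C) :
    ∃ ε : ℝ, 0 < ε ∧ z + ε • (z - y) ∈ C := by
  obtain ⟨z', hz', rfl⟩ := mem_intrinsicInterior.1 hz
  let line : ℝ → affineSpan ℝ C := fun t =>
    ⟨z' + t • ((z' : E) - y), by
      simpa [vsub_eq_sub, vadd_eq_add, add_comm] using
        (affineSpan ℝ C).smul_vsub_vadd_mem t z'.2 hy z'.2⟩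
  have hline : Continuous line := by fun_prop
  have h0 : line 0 = z' := by ext; simp [line]
  have hnhds : ∀ᶠ t in 𝓝 (0 : ℝ), line t ∈ interior ((↑) ⁻¹' C : Set (affineSpan ℝ C)) :=
    hline.continuousAt.preimage_mem_nhds (h0 ▸ isOpen_interior.mem_nhds hz')
  obtain ⟨ε, hεC, hε⟩ :=
    ((hnhds.filter_mono nhdsWithin_le_nhds).and (self_mem_nhdsWithin (s := Ioi 0))).exists
  exact ⟨ε, hε, (interior_subset hεC : line ε ∈ (↑) ⁻¹' C)⟩

section Cone

variable {E : Type*} [AddCommGroup E] [Module ℝ E] {F K : Set E}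

theorem Convex.add_mem_of_smul_mem (hconv : Convex ℝ K)
    (hcone : ∀ c : ℝ, 0 ≤ c → ∀ z ∈ K, c • z ∈ K) {u v : E} (hu : u ∈ K) (hv : v ∈ K) :
    u + v ∈ K := by
  convert hcone 2 zero_le_two _ (hconv hu hv one_half_pos.le one_half_pos.le (add_halves 1))
    using 1
  module

theorem IsFaceOf.mem_of_add_smul_sub_mem (hF : IsFaceOf F K) {z y : E} (hz : z ∈ F)
    (hy : y ∈ K) {ε : ℝ} (hε : 0 < ε) (hyz : z + ε • (z - y) ∈ K) : y ∈ F := by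
  refine (hF.2.2 _ hyz _ hy (1 + ε)⁻¹ (by positivity) (inv_lt_one_of_one_lt₀ (by linarith))
    ?_).2
  convert hz using 1
  have : 1 + ε ≠ 0 := by positivity
  match_scalars <;> field_simp
  ring

theorem IsFaceOf.smul_mem (hF : IsFaceOf F K) (hcone : ∀ c : ℝ, 0 ≤ c → ∀ z ∈ K, c • z ∈ K)
    {c : ℝ} (hc : 0 ≤ c) {f : E} (hf : f ∈ F) : c • f ∈ F := by
  have hfK := hF.1 hf
  rcases le_or_gt c 1 with hc1 | hc1
  · -- `f` is the midpoint of `c • f` and `(2 - c) • f`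
    refine (hF.2.2 _ (hcone c hc f hfK) _ (hcone (2 - c) (by linarith) f hfK) (1 / 2)
      one_half_pos one_half_lt_one ?_).1
    convert hf using 1
    module
  · refine (hF.2.2 _ (hcone c hc f hfK) _ (hcone 0 le_rfl f hfK) c⁻¹ (by positivity)
      (inv_lt_one_of_one_lt₀ hc1) ?_).1
    convert hf using 1
    rw [zero_smul, smul_zero, add_zero, inv_smul_smul₀ (by positivity)]

theorem IsFaceOf.mem_of_add_mem (hF : IsFaceOf F K)
    (hcone : ∀ c : ℝ, 0 ≤ c → ∀ z ∈ K, c • z ∈ K) {u v : E} (hu : u ∈ K) (hv : v ∈ K)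
    (huv : u + v ∈ F) : u ∈ F ∧ v ∈ F :=
  hF.2.2 _ hu _ hv (1 / 2) one_half_pos one_half_lt_one <| by
    convert hF.smul_mem hcone one_half_pos.le huv using 1
    module

end Cone

theorem slack_mem_of_mem_intrinsicInterior
    {X Y : Type*} [AddCommGroup X] [Module ℝ X] [TopologicalSpace X] [ContinuousAdd X]
    [ContinuousSMul ℝ X] [AddCommGroup Y] [Module ℝ Y] {K F : Set Y} (hF : IsFaceOf F K)
    (A : X →ₗ[ℝ] Y) (b : Y) {xbar : X} (hxbar : xbar ∈ intrinsicInterior ℝ {x | b - A x ∈ K})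
    (hF_slack : b - A xbar ∈ F) {x : X} (hx : b - A x ∈ K) : b - A x ∈ F := by
  obtain ⟨ε, hε, hfeas⟩ :=
    exists_add_smul_sub_mem_of_mem_intrinsicInterior hxbar (subset_affineSpan ℝ _ hx)
  refine hF.mem_of_add_smul_sub_mem hF_slack hx hε ?_
  convert show b - A (xbar + ε • (xbar - x)) ∈ K from hfeas using 1
  simp only [map_add, map_smul, map_sub]
  module

theorem exists_smul_sub_sub_mem_of_mem
    {X Y : Type*} [AddCommGroup X] [Module ℝ X] [AddCommGroup Y] [Module ℝ Y]
    [TopologicalSpace Y] [ContinuousAdd Y] [ContinuousSMul ℝ Y] {K F : Set Y} (hFK : F ⊆ K)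
    (hcone : ∀ c : ℝ, 0 ≤ c → ∀ z ∈ K, c • z ∈ K) (A : X →ₗ[ℝ] Y) (b : Y) {xbar : X}
    (hslack : b - A xbar ∈ intrinsicInterior ℝ F) {s : Y} (hs : s ∈ F) :
    ∃ (x : X) (α : ℝ), 0 ≤ α ∧ α • b - A x - s ∈ K := by
  obtain ⟨ε, hε, hbeyond⟩ :=
    exists_add_smul_sub_mem_of_mem_intrinsicInterior hslack (subset_affineSpan ℝ _ hs)
  refine ⟨((1 + ε) / ε) • xbar, (1 + ε) / ε, by positivity, ?_⟩
  convert hcone ε⁻¹ (by positivity) _ (hFK hbeyond) using 1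
  rw [map_smul]
  match_scalars <;> field_simp
  ring

theorem IsFaceOf.mem_of_smul_sub_sub_mem
    {X Y : Type*} [AddCommGroup X] [Module ℝ X] [TopologicalSpace X] [ContinuousAdd X]
    [ContinuousSMul ℝ X] [AddCommGroup Y] [Module ℝ Y] {K F : Set Y} (hF : IsFaceOf F K)
    (hconv : Convex ℝ K) (hcone : ∀ c : ℝ, 0 ≤ c → ∀ z ∈ K, c • z ∈ K) (A : X →ₗ[ℝ] Y) (b : Y)
    {xbar : X} (hxbar : xbar ∈ intrinsicInterior ℝ {x | b - A x ∈ K})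
    (hslack : b - A xbar ∈ F) {s : Y} (hs : s ∈ K) {x : X} {α : ℝ} (hα : 0 ≤ α)
    (hgap : α • b - A x - s ∈ K) : s ∈ F := by
  have hα1 : 0 < α + 1 := by linarith
  have hrest : α • b - A x - s + (b - A xbar) ∈ K :=
    hconv.add_mem_of_smul_mem hcone hgap (hF.1 hslack)
  have hscaled : s + (α • b - A x - s + (b - A xbar)) =
      (α + 1) • (b - A ((α + 1)⁻¹ • (x + xbar))) := by
    rw [map_smul, smul_sub, smul_smul, mul_inv_cancel₀ hα1.ne', one_smul, map_add]
    module
  have hfeas : b - A ((α + 1)⁻¹ • (x + xbar)) ∈ K := by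
    convert hcone (α + 1)⁻¹ (by positivity) _ (hconv.add_mem_of_smul_mem hcone hs hrest) using 1
    rw [hscaled, inv_smul_smul₀ hα1.ne']
  have hsumF : s + (α • b - A x - s + (b - A xbar)) ∈ F := by
    rw [hscaled]
    exact hF.smul_mem hcone hα1.le (slack_mem_of_mem_intrinsicInterior hF A b hxbar hslack hfeas)
  exact (hF.mem_of_add_mem hcone hs hrest hsumF).1

theorem stmt18_general
    {X Y : Type*} [NormedAddCommGroup X] [InnerProductSpace ℝ X]
    [NormedAddCommGroup Y] [InnerProductSpace ℝ Y]
    (K : Set Y) (hKconv : Convex ℝ K)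
    (hKcone : ∀ c : ℝ, 0 ≤ c → ∀ z ∈ K, c • z ∈ K)
    (A : X →ₗ[ℝ] Y) (b : Y)
    (xbar : X) (hxbar : xbar ∈ intrinsicInterior ℝ {x : X | b - A x ∈ K})
    (Fmin : Set Y) (hFminFace : IsFaceOf Fmin K)
    (hFmin : b - A xbar ∈ intrinsicInterior ℝ Fmin) :
    Fmin = {s : Y | s ∈ K ∧ ∃ (x : X) (α : ℝ), 0 ≤ α ∧ α • b - A x - s ∈ K} := by
  ext s
  constructor
  · intro hs
    exact ⟨hFminFace.1 hs, exists_smul_sub_sub_mem_of_mem hFminFace.1 hKcone A b hFmin hs⟩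
  · rintro ⟨hs, x, α, hα, hgap⟩
    exact hFminFace.mem_of_smul_sub_sub_mem hKconv hKcone A b hxbar
      (intrinsicInterior_subset hFmin) hs hα hgap

theorem stmt18
    {X Y : Type*} [NormedAddCommGroup X] [InnerProductSpace ℝ X] [FiniteDimensional ℝ X]
    [NormedAddCommGroup Y] [InnerProductSpace ℝ Y] [FiniteDimensional ℝ Y]
    (K : Set Y) (hKclosed : IsClosed K) (hKconv : Convex ℝ K)
    (hKcone : ∀ c : ℝ, 0 ≤ c → ∀ z ∈ K, c • z ∈ K)
    (A : X →ₗ[ℝ] Y) (b : Y)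
    (xbar : X) (hxbar : xbar ∈ intrinsicInterior ℝ {x : X | b - A x ∈ K})
    (Fmin : Set Y) (hFminFace : IsFaceOf Fmin K)
    (hFmin : b - A xbar ∈ intrinsicInterior ℝ Fmin) :
    Fmin = {s : Y | s ∈ K ∧ ∃ (x : X) (α : ℝ), 0 ≤ α ∧ α • b - A x - s ∈ K} :=
  stmt18_general K hKconv hKcone A b xbar hxbar Fmin hFminFace hFmin
end
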